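/- arXiv:2304.01462 — 3 statements merged into one kernel-verified Lean document; each statement's English description precedes it below -/
import Mathlib

section
/- For every integer r ≥ 0, the maximum loneliness of the speed tuple (8, 4r+3, 4r+11, 4r+19) equals (2r+7)/(4(2r+7)+2); that is, ML(8, 4r+3, 4r+11, 4r+19) = (2r+7)/(8r+30). -/
/-!
Write `u` and `b` for the signed residues of `8t` and `(4r+11)t` modulo `1`. The speeds `4r+3`
and `4r+19` then have residues `b - u` and `b + u` modulo `1`, and `8b - (4r+11)u` is an integer.
If all four distances to the nearest integer exceeded `K = (2r+7)/(8r+30)`, the point `(|u|, |b|)`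
would lie in one of two small triangles cut out by `K < |u|, |b| ≤ 1/2` and `K < ||b| - |u||`,
and on each of them both forms `8|b| ∓ (4r+11)|u|` lie strictly between two consecutive integers.
The bound `K` is attained at `t = (13 - 4r - 2r²)/(8r+30)`.
-/

/-- Distance from a real number to the nearest integer. -/
noncomputable def distToInt (x : ℝ) : ℝ := ⨅ m : ℤ, |x - m|

/-- Maximum loneliness of a tuple of speeds. -/
noncomputable def ML {n : ℕ} (v : Fin n → ℤ) : ℝ :=
  ⨆ t : ℝ, ⨅ i : Fin n, distToInt (t * v i)

lemma distToInt_nonneg (x : ℝ) : 0 ≤ distToInt x :=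
  le_ciInf fun _ => abs_nonneg _

lemma distToInt_le_abs_sub (x : ℝ) (n : ℤ) : distToInt x ≤ |x - n| :=
  ciInf_le ⟨0, Set.forall_mem_range.2 fun _ => abs_nonneg _⟩ n

lemma distToInt_le_abs (x : ℝ) : distToInt x ≤ |x| := by
  simpa using distToInt_le_abs_sub x 0

lemma distToInt_eq_abs_sub {x : ℝ} {n : ℤ} (h : |x - n| ≤ 1 / 2) : distToInt x = |x - n| := by
  refine le_antisymm (distToInt_le_abs_sub x n) (le_ciInf fun m => ?_)
  rcases eq_or_ne m n with rfl | hmn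
  · exact le_rfl
  · have h1 : (1 : ℝ) ≤ |(n : ℝ) - m| := by exact_mod_cast Int.one_le_abs (sub_ne_zero.2 hmn.symm)
    have h2 : |(n : ℝ) - m| ≤ |x - m| + |x - n| := by
      simpa using abs_sub (x - m) (x - n)
    linarith

lemma distToInt_eq_abs_sub_round (x : ℝ) : distToInt x = |x - round x| :=
  distToInt_eq_abs_sub (abs_sub_round x)

lemma distToInt_le_half (x : ℝ) : distToInt x ≤ 1 / 2 :=
  (distToInt_eq_abs_sub_round x).trans_le (abs_sub_round x)

lemma distToInt_add_intCast (x : ℝ) (n : ℤ) : distToInt (x + n) = distToInt x := by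
  rw [distToInt_eq_abs_sub_round, distToInt_eq_abs_sub_round x, round_add_intCast]
  push_cast
  ring_nf

lemma distToInt_neg (x : ℝ) : distToInt (-x) = distToInt x := by
  rw [distToInt, ← (Equiv.neg ℤ).iInf_comp]
  congr 1 with m
  rw [← abs_neg]
  push_cast [Equiv.neg_apply]
  ring_nf

lemma distToInt_abs_sub_abs (x y : ℝ) :
    distToInt (|x| - |y|) = distToInt (x - y) ∨ distToInt (|x| - |y|) = distToInt (x + y) := by
  rcases abs_choice x with hx | hx <;> rcases abs_choice y with hy | hy <;> rw [hx, hy]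
  · exact .inl rfl
  · exact .inr (by ring_nf)
  · exact .inr (by rw [← distToInt_neg]; ring_nf)
  · exact .inl (by rw [← distToInt_neg]; ring_nf)

lemma ML_le {n : ℕ} (v : Fin n → ℤ) {K : ℝ} (hK : 0 ≤ K)
    (h : ∀ t : ℝ, ∃ i, distToInt (t * v i) ≤ K) : ML v ≤ K :=
  Real.iSup_le (fun t => by
    obtain ⟨i, hi⟩ := h t
    exact (ciInf_le ⟨0, Set.forall_mem_range.2 fun _ => distToInt_nonneg _⟩ i).trans hi) hK

lemma le_ML {n : ℕ} [NeZero n] (v : Fin n → ℤ) {K : ℝ} (t : ℝ)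
    (h : ∀ i, K ≤ distToInt (t * v i)) : K ≤ ML v := by
  refine (le_ciInf h).trans (le_ciSup (f := fun s : ℝ => ⨅ i, distToInt (s * v i)) ⟨1 / 2, ?_⟩ t)
  rintro _ ⟨s, rfl⟩
  exact (ciInf_le ⟨0, Set.forall_mem_range.2 fun _ => distToInt_nonneg _⟩ 0).trans
    (distToInt_le_half _)

lemma false_of_intCast_mem_Ioo {n j : ℤ} (h₁ : (n : ℝ) < j) (h₂ : (j : ℝ) < n + 1) : False := by
  have : n < j := by exact_mod_cast h₁
  have : j < n + 1 := by exact_mod_cast h₂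
  omega

lemma exists_intCast_eq_mul_abs_sub_or_add {a c x y : ℝ} {j : ℤ} (h : (j : ℝ) = a * x - c * y) :
    ∃ j' : ℤ, (j' : ℝ) = a * |x| - c * |y| ∨ (j' : ℝ) = a * |x| + c * |y| := by
  rcases abs_choice x with hx | hx <;> rcases abs_choice y with hy | hy <;> rw [hx, hy]
  exacts [⟨j, .inl h⟩, ⟨j, .inr (by linarith)⟩, ⟨-j, .inr (by push_cast; linarith)⟩,
    ⟨-j, .inl (by push_cast; linarith)⟩]

lemma false_of_lonely_residues {r : ℕ} {K u y : ℝ} {j : ℤ}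
    (hK : K * (8 * r + 30) = 2 * r + 7) (hu : K < u) (hu' : u ≤ 1 / 2) (hy : K < y)
    (hy' : y ≤ 1 / 2) (hyu : K < |y - u|)
    (hj : (j : ℝ) = 8 * y - (4 * r + 11) * u ∨ (j : ℝ) = 8 * y + (4 * r + 11) * u) : False := by
  have hr : (0 : ℝ) ≤ r := r.cast_nonneg
  rcases hj with hj | hj <;> rcases lt_abs.mp hyu with hyu | hyu
  · have p₁ : 0 < (4 * (r : ℝ) + 11) * (u - K) := mul_pos (by positivity) (sub_pos.2 hu)
    have p₂ : 0 < (4 * (r : ℝ) + 3) * (1 / 2 - K - u) := mul_pos (by positivity) (by linarith)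
    exact false_of_intCast_mem_Ioo (n := 1 - r) (by push_cast; nlinarith) (by push_cast; nlinarith)
  · have p₁ : 0 < (4 * (r : ℝ) + 11) * (u - y - K) := mul_pos (by positivity) (by linarith)
    have p₂ : 0 < (4 * (r : ℝ) + 3) * (y - K) := mul_pos (by positivity) (sub_pos.2 hy)
    have p₃ : 0 ≤ (4 * (r : ℝ) + 11) * (1 / 2 - u) := mul_nonneg (by positivity) (by linarith)
    exact false_of_intCast_mem_Ioo (n := -(2 * r + 4)) (by push_cast; nlinarith)
      (by push_cast; nlinarith)
  · have p₁ : 0 < (4 * (r : ℝ) + 19) * (u - K) := mul_pos (by positivity) (sub_pos.2 hu)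
    have p₂ : 0 < (4 * (r : ℝ) + 11) * (1 / 2 - K - u) := mul_pos (by positivity) (by linarith)
    exact false_of_intCast_mem_Ioo (n := r + 6) (by push_cast; nlinarith) (by push_cast; nlinarith)
  · have p₁ : 0 < (4 * (r : ℝ) + 11) * (u - y - K) := mul_pos (by positivity) (by linarith)
    have p₂ : 0 < (4 * (r : ℝ) + 19) * (y - K) := mul_pos (by positivity) (sub_pos.2 hy)
    have p₃ : 0 ≤ (4 * (r : ℝ) + 11) * (1 / 2 - u) := mul_nonneg (by positivity) (by linarith)
    exact false_of_intCast_mem_Ioo (n := 2 * r + 7) (by push_cast; nlinarith)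
      (by push_cast; nlinarith)

lemma exists_distToInt_le (r : ℕ) (t : ℝ) :
    ∃ i, distToInt (t * (![8, 4 * (r : ℤ) + 3, 4 * (r : ℤ) + 11, 4 * (r : ℤ) + 19] i : ℝ))
      ≤ (2 * r + 7) / (8 * r + 30) := by
  set K : ℝ := (2 * r + 7) / (8 * r + 30)
  have hK : K * (8 * r + 30) = 2 * r + 7 := div_mul_cancel₀ _ (by positivity)
  by_contra! h
  simp only [Fin.forall_fin_succ, Fin.isValue, Matrix.cons_val_zero, Matrix.cons_val_succ,
    Matrix.cons_val_fin_one, Int.cast_ofNat, Int.cast_add, Int.cast_mul, Int.cast_natCast,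
    forall_const] at h
  obtain ⟨h₈, h₃, h₁₁, h₁₉⟩ := h
  set u := t * 8 - round (t * 8)
  set b := t * (4 * r + 11) - round (t * (4 * r + 11))
  rw [distToInt_eq_abs_sub_round] at h₈ h₁₁
  have hsub : K < distToInt (b - u) := by
    have : t * (4 * r + 3) = b - u + ((round (t * (4 * r + 11)) - round (t * 8) : ℤ) : ℝ) := by
      push_cast; ring
    rwa [this, distToInt_add_intCast] at h₃
  have hadd : K < distToInt (b + u) := by
    have : t * (4 * r + 19) = b + u + ((round (t * (4 * r + 11)) + round (t * 8) : ℤ) : ℝ) := by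
      push_cast; ring
    rwa [this, distToInt_add_intCast] at h₁₉
  have hbu : K < |(|b| - |u|)| := by
    refine lt_of_lt_of_le ?_ (distToInt_le_abs _)
    rcases distToInt_abs_sub_abs b u with h | h <;> rwa [h]
  obtain ⟨j, hj⟩ := exists_intCast_eq_mul_abs_sub_or_add (a := 8) (c := 4 * r + 11) (x := b)
    (y := u) (j := (4 * r + 11) * round (t * 8) - 8 * round (t * (4 * r + 11))) (by push_cast; ring)
  exact false_of_lonely_residues hK h₈ (abs_sub_round _) h₁₁ (abs_sub_round _) hbu hj

lemma le_distToInt_of_sub_intCast_eq_div {x e D K : ℝ} {n : ℤ} (hD : 0 < D) (h : x - n = e / D)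
    (he : 2 * |e| ≤ D) (hK : K * D ≤ |e|) : K ≤ distToInt x := by
  have hc : |x - n| = |e| / D := by rw [h, abs_div, abs_of_pos hD]
  rw [distToInt_eq_abs_sub (by rw [hc, div_le_iff₀ hD]; linarith), hc, le_div_iff₀ hD]
  exact hK

/-- At this `t` the four speeds have residues `(4r+14, 2r+9, -(2r+7), 2r+7) / (8r+30)`. -/
lemma le_distToInt_witness (r : ℕ) : ∀ i,
    (2 * r + 7) / (8 * r + 30) ≤ distToInt ((13 - 4 * r - 2 * r ^ 2) / (8 * r + 30) *
      (![8, 4 * (r : ℤ) + 3, 4 * (r : ℤ) + 11, 4 * (r : ℤ) + 19] i : ℝ)) := by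
  have hD : (0 : ℝ) < 8 * r + 30 := by positivity
  have hK : (2 * r + 7) / (8 * r + 30) * (8 * r + 30) = (2 * r + 7 : ℝ) := div_mul_cancel₀ _ hD.ne'
  simp only [Fin.forall_fin_succ, Fin.isValue, Matrix.cons_val_zero, Matrix.cons_val_succ,
    Matrix.cons_val_fin_one, Int.cast_ofNat, Int.cast_add, Int.cast_mul, Int.cast_natCast,
    forall_const]
  refine ⟨?_, ?_, ?_, ?_⟩
  · refine le_distToInt_of_sub_intCast_eq_div (n := 3 - 2 * r) (e := 4 * r + 14) hD
      (by push_cast; field_simp; ring) ?_ ?_ <;> rw [abs_of_nonneg (by positivity)] <;> linarith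
  · refine le_distToInt_of_sub_intCast_eq_div (n := -r ^ 2 + r + 1) (e := 2 * r + 9) hD
      (by push_cast; field_simp; ring) ?_ ?_ <;> rw [abs_of_nonneg (by positivity)] <;> linarith
  · refine le_distToInt_of_sub_intCast_eq_div (n := -r ^ 2 - r + 5) (e := -(2 * r + 7)) hD
      (by push_cast; field_simp; ring) ?_ ?_ <;> rw [abs_neg, abs_of_nonneg (by positivity)] <;>
      linarith
  · refine le_distToInt_of_sub_intCast_eq_div (n := -r ^ 2 - 3 * r + 8) (e := 2 * r + 7) hD
      (by push_cast; field_simp; ring) ?_ ?_ <;> rw [abs_of_nonneg (by positivity)] <;> linarith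

theorem fan_sun_family (r : ℕ) :
    ML ![8, 4 * (r : ℤ) + 3, 4 * (r : ℤ) + 11, 4 * (r : ℤ) + 19]
      = (2 * (r : ℝ) + 7) / (8 * (r : ℝ) + 30) :=
  le_antisymm (ML_le _ (by positivity) (exists_distToInt_le r))
    (le_ML _ _ (le_distToInt_witness r))
end

section
/- Let V > 0 and let k ≤ n be positive integers. There are only finitely many k-dimensional subtori of (ℝ/ℤ)ⁿ with k-dimensional volume at most V. Equivalently, there are only finitely many rank-k primitive sublattices Λ ⊆ ℤⁿ with covolume (in the subspace they span) at most V. -/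
/-- The covolume of the lattice spanned by the integer vectors `b 0, ..., b (k-1)`,
namely the square root of the Gram determinant. -/
noncomputable def latticeCovol {n k : ℕ} (b : Fin k → (Fin n → ℤ)) : ℝ :=
  Real.sqrt (Matrix.det (Matrix.of fun i j : Fin k => ((∑ l, b i l * b j l : ℤ) : ℝ)))

/-!
A saturated lattice is determined by the maximal minors of any of its bases (its Plücker
coordinates): if `b` has a nonzero minor `d`, Cramer's rule writes `d • b` as a combination of
the rows of any `b'` with the same minors, and saturation lets us divide by `d`. By Cauchy–Binet,
`k! · det (b bᵀ) = ∑_f (det b_f)²`, so the minors of a basis are bounded in terms of the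
covolume, and only finitely many minor vectors occur.
-/

open Finset Equiv
open scoped Nat

namespace Matrix

variable {m n R : Type*} [Fintype m] [DecidableEq m] [CommRing R]

theorem det_submatrix_comp_perm (A : Matrix m n R) (f : m → n) (σ : Perm m) :
    (A.submatrix id (f ∘ σ)).det = Perm.sign σ * (A.submatrix id f).det := by
  rw [← det_permute', submatrix_submatrix]
  rfl

theorem submatrix_mul_cramer_eq_det_smul (A : Matrix m n R) (g : m → n) :
    A.submatrix id g * of (fun i j => (A.submatrix id (Function.update g i j)).det) =
      (A.submatrix id g).det • A := by
  ext r j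
  have hcol : (fun i => (A.submatrix id (Function.update g i j)).det) =
      (A.submatrix id g).cramer (fun r => A r j) := by
    funext i
    rw [cramer_apply]
    congr 1
    ext r' c
    by_cases hc : c = i <;> simp [hc]
  have hcramer := congrFun (mulVec_cramer (A.submatrix id g) (fun r => A r j)) r
  rw [← hcol] at hcramer
  simpa [mul_apply, mulVec, dotProduct] using hcramer

theorem det_smul_eq_mul_of_det_submatrix_eq [IsDomain R] {A A' : Matrix m n R} {g : m → n}
    (h : ∀ f, (A.submatrix id f).det = (A'.submatrix id f).det)
    (hg : (A.submatrix id g).det ≠ 0) :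
    (A.submatrix id g).det • A = A.submatrix id g * adjugate (A'.submatrix id g) * A' := by
  set N := of fun i j => (A.submatrix id (Function.update g i j)).det
  have hA : A.submatrix id g * N = (A.submatrix id g).det • A :=
    submatrix_mul_cramer_eq_det_smul A g
  have hA' : A'.submatrix id g * N = (A.submatrix id g).det • A' := by
    simp only [N, h, submatrix_mul_cramer_eq_det_smul]
  have hN : N = adjugate (A'.submatrix id g) * A' := by
    refine smul_right_injective (m → n → R) hg ?_
    calc (A.submatrix id g).det • N
          = adjugate (A'.submatrix id g) * (A'.submatrix id g * N) := by
          rw [← Matrix.mul_assoc, adjugate_mul, ← h, smul_mul, Matrix.one_mul]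
      _ = (A.submatrix id g).det • (adjugate (A'.submatrix id g) * A') := by
          rw [hA', Matrix.mul_smul]
  rw [← hA, hN, Matrix.mul_assoc]

theorem span_rows_le_of_det_submatrix_eq [IsDomain R] {A A' : Matrix m n R}
    {Λ : Submodule R (n → R)} (hΛ : ∀ (x : n → R) (c : R), c ≠ 0 → c • x ∈ Λ → x ∈ Λ)
    (hA' : ∀ i, A' i ∈ Λ) (h : ∀ f, (A.submatrix id f).det = (A'.submatrix id f).det)
    {g : m → n} (hg : (A.submatrix id g).det ≠ 0) :
    Submodule.span R (Set.range A) ≤ Λ := by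
  rw [Submodule.span_le]
  rintro _ ⟨r, rfl⟩
  refine hΛ _ _ hg ?_
  have hrow := congrFun (det_smul_eq_mul_of_det_submatrix_eq h hg) r
  change ((A.submatrix id g).det • A) r ∈ Λ
  rw [hrow, mul_apply_eq_vecMul, vecMul_eq_sum]
  exact Λ.sum_mem fun i _ => Λ.smul_mem _ (hA' i)

variable [Fintype n]

theorem det_mul_eq_sum_prod_mul_det_submatrix (A : Matrix m n R) (B : Matrix n m R) :
    (A * B).det = ∑ f : m → n, (∏ i, B (f i) i) * (A.submatrix id f).det := by
  simp only [det_apply', mul_apply, prod_univ_sum, Fintype.piFinset_univ, mul_sum,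
    prod_mul_distrib, submatrix_apply, id]
  rw [sum_comm]
  exact sum_congr rfl fun f _ => sum_congr rfl fun σ _ => by ring

/-- Cauchy–Binet, summed over all maps `m → n` instead of over the `card m`-subsets of `n`:
each subset is counted once per permutation of `m`. -/
theorem card_perm_mul_det_mul (A : Matrix m n R) (B : Matrix n m R) :
    (Fintype.card (Perm m) : R) * (A * B).det =
      ∑ f : m → n, (A.submatrix id f).det * (B.submatrix f id).det := by
  have reindex : ∀ σ : Perm m, (A * B).det =
      ∑ f : m → n, (A.submatrix id f).det * (Perm.sign σ * ∏ i, B (f (σ i)) i) := by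
    intro σ
    rw [det_mul_eq_sum_prod_mul_det_submatrix]
    refine (Fintype.sum_equiv (σ.symm.arrowCongr (Equiv.refl n)) _ _ fun f => ?_).symm
    change _ = (∏ i, B (f (σ i)) i) * (A.submatrix id (f ∘ σ)).det
    rw [det_submatrix_comp_perm]
    ring
  calc (Fintype.card (Perm m) : R) * (A * B).det
      = ∑ σ : Perm m, (A * B).det := by simp
    _ = ∑ σ : Perm m, ∑ f : m → n,
          (A.submatrix id f).det * (Perm.sign σ * ∏ i, B (f (σ i)) i) :=
        sum_congr rfl fun σ _ => reindex σ
    _ = ∑ f : m → n, (A.submatrix id f).det * (B.submatrix f id).det := by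
      rw [sum_comm]
      simp only [← mul_sum]
      refine sum_congr rfl fun f _ => ?_
      rw [det_apply' (B.submatrix f id)]
      rfl

theorem card_perm_mul_det_mul_transpose (A : Matrix m n R) :
    (Fintype.card (Perm m) : R) * (A * Aᵀ).det = ∑ f : m → n, (A.submatrix id f).det ^ 2 := by
  rw [card_perm_mul_det_mul]
  refine sum_congr rfl fun f _ => ?_
  rw [← transpose_submatrix, det_transpose, sq]

section LinearOrder

variable [LinearOrder R] [IsStrictOrderedRing R]

theorem sq_det_submatrix_le (A : Matrix m n R) (f : m → n) :
    (A.submatrix id f).det ^ 2 ≤ Fintype.card (Perm m) * (A * Aᵀ).det := by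
  rw [card_perm_mul_det_mul_transpose]
  exact single_le_sum (f := fun f => (A.submatrix id f).det ^ 2) (fun g _ => sq_nonneg _)
    (mem_univ f)

theorem det_mul_transpose_ne_zero {A : Matrix m n R} (hA : LinearIndependent R A) :
    (A * Aᵀ).det ≠ 0 := by
  intro h
  obtain ⟨v, hv, hvA⟩ := exists_vecMul_eq_zero_iff.mpr h
  have hy : v ᵥ* A = 0 := by
    apply dotProduct_self_eq_zero.mp
    rw [← dotProduct_mulVec, ← vecMul_transpose, vecMul_vecMul, hvA, dotProduct_zero]
  rw [vecMul_eq_sum] at hy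
  exact hv (funext (Fintype.linearIndependent_iff.mp hA v hy))

theorem exists_det_submatrix_ne_zero {A : Matrix m n R} (hA : LinearIndependent R A) :
    ∃ f : m → n, (A.submatrix id f).det ≠ 0 := by
  by_contra! h
  apply det_mul_transpose_ne_zero hA
  simp [det_mul_eq_sum_prod_mul_det_submatrix, h]

end LinearOrder
end Matrix

open Matrix

theorem eq_of_det_submatrix_eq {m n R : Type*} [Fintype m] [DecidableEq m] [Fintype n]
    [CommRing R] [LinearOrder R] [IsStrictOrderedRing R] {A A' : Matrix m n R}
    {Λ Λ' : Submodule R (n → R)} (hΛ : ∀ (x : n → R) (c : R), c ≠ 0 → c • x ∈ Λ → x ∈ Λ)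
    (hΛ' : ∀ (x : n → R) (c : R), c ≠ 0 → c • x ∈ Λ' → x ∈ Λ') (hA : LinearIndependent R A)
    (hAΛ : Submodule.span R (Set.range A) = Λ) (hA'Λ' : Submodule.span R (Set.range A') = Λ')
    (h : ∀ f, (A.submatrix id f).det = (A'.submatrix id f).det) : Λ = Λ' := by
  obtain ⟨g, hg⟩ := exists_det_submatrix_ne_zero hA
  subst hAΛ hA'Λ'
  exact le_antisymm
    (span_rows_le_of_det_submatrix_eq hΛ' (fun i => Submodule.subset_span ⟨i, rfl⟩) h hg)
    (span_rows_le_of_det_submatrix_eq hΛ (fun i => Submodule.subset_span ⟨i, rfl⟩)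
      (fun f => (h f).symm) (h g ▸ hg))

theorem latticeCovol_eq_sqrt_det {n k : ℕ} (b : Fin k → Fin n → ℤ) :
    latticeCovol b = √((of b * (of b)ᵀ).det : ℝ) := by
  rw [latticeCovol, Int.cast_det]
  rfl

theorem abs_det_submatrix_le_of_latticeCovol_le {n k : ℕ} {b : Fin k → Fin n → ℤ} {V : ℝ}
    (hb : latticeCovol b ≤ V) (f : Fin k → Fin n) :
    |((of b).submatrix id f).det| ≤ ⌈(k ! : ℝ) * V ^ 2⌉ := by
  set d := ((of b).submatrix id f).det
  have hd : d ^ 2 ≤ k ! * (of b * (of b)ᵀ).det := by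
    simpa [Fintype.card_perm] using sq_det_submatrix_le (of b) f
  have hgram : ((of b * (of b)ᵀ).det : ℝ) ≤ V ^ 2 :=
    (Real.sqrt_le_iff.mp (latticeCovol_eq_sqrt_det b ▸ hb)).2
  have habs : |d| ≤ d ^ 2 := Int.natCast_natAbs d ▸ Int.natAbs_le_self_sq d
  have hreal : (|d| : ℝ) ≤ ⌈(k ! : ℝ) * V ^ 2⌉ :=
    calc (|d| : ℝ) ≤ d ^ 2 := by exact_mod_cast habs
      _ ≤ k ! * (of b * (of b)ᵀ).det := by exact_mod_cast hd
      _ ≤ k ! * V ^ 2 := by gcongr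
      _ ≤ ⌈(k ! : ℝ) * V ^ 2⌉ := Int.le_ceil _
  exact_mod_cast hreal

theorem finitely_many_small_subtori_general (n k : ℕ) (V : ℝ) :
    {Λ : Submodule ℤ (Fin n → ℤ) |
      (∃ b : Fin k → (Fin n → ℤ), LinearIndependent ℤ b ∧
          Submodule.span ℤ (Set.range b) = Λ ∧ latticeCovol b ≤ V) ∧
      (∀ (x : Fin n → ℤ) (m : ℤ), m ≠ 0 → m • x ∈ Λ → x ∈ Λ)}.Finite := by
  set N := ⌈(k ! : ℝ) * V ^ 2⌉
  have hfibre : ∀ p : (Fin k → Fin n) → ℤ, Set.Subsingleton {Λ : Submodule ℤ (Fin n → ℤ) |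
      (∀ (x : Fin n → ℤ) (m : ℤ), m ≠ 0 → m • x ∈ Λ → x ∈ Λ) ∧
      ∃ b : Fin k → (Fin n → ℤ), LinearIndependent ℤ b ∧ Submodule.span ℤ (Set.range b) = Λ ∧
        ∀ f, ((of b).submatrix id f).det = p f} := by
    rintro p Λ ⟨hΛ, b, hb, hbΛ, hbp⟩ Λ' ⟨hΛ', b', -, hb'Λ', hb'p⟩
    exact eq_of_det_submatrix_eq hΛ hΛ' hb hbΛ hb'Λ' fun f => (hbp f).trans (hb'p f).symm
  refine ((Set.Finite.pi fun _ => Set.finite_Icc (-N) N).biUnion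
    fun p _ => (hfibre p).finite).subset ?_
  rintro Λ ⟨⟨b, hb, hbΛ, hV⟩, hΛ⟩
  exact Set.mem_biUnion (fun f _ => abs_le.mp (abs_det_submatrix_le_of_latticeCovol_le hV f))
    ⟨hΛ, b, hb, hbΛ, fun f => rfl⟩

theorem finitely_many_small_subtori (n k : ℕ) (hk : 0 < k) (hkn : k ≤ n)
    (V : ℝ) (hV : 0 < V) :
    {Λ : Submodule ℤ (Fin n → ℤ) |
      (∃ b : Fin k → (Fin n → ℤ), LinearIndependent ℤ b ∧
          Submodule.span ℤ (Set.range b) = Λ ∧ latticeCovol b ≤ V) ∧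
      (∀ (x : Fin n → ℤ) (m : ℤ), m ≠ 0 → m • x ∈ Λ → x ∈ Λ)}.Finite :=
  finitely_many_small_subtori_general n k V
end

section
/- Let Λ ⊂ ℝ^k be a lattice of full rank k. Then there exists a ℤ-basis b1,...,bk of Λ such that the product ‖b1‖₂ ⋯ ‖bk‖₂ ≤ 2^k (3/2)^{k(k-1)/2} · covol(Λ) / ω_k, where ω_k is the volume of the Euclidean unit ball in ℝ^k. -/
/-- The volume of the Euclidean unit ball in ℝ^k. -/
noncomputable def unitBallVol (k : ℕ) : ℝ :=
  Real.pi ^ ((k : ℝ) / 2) / Real.Gamma ((k : ℝ) / 2 + 1)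

/-!
Hermite's argument. Let `v` be a shortest nonzero vector of the lattice `L`. Projecting `L`
orthogonally onto `vᗮ` gives a lattice of one dimension less (discrete because every projected
point has a lift that is size-reduced against `v`). Lift a basis `c` of the projection, given by
induction, to `L` and size-reduce each lift `x` against `v`: then
`‖x‖² ≤ ‖c i‖² + ‖v‖² / 4 ≤ ‖c i‖² + ‖x‖² / 4` because `v` is shortest, so `‖x‖² ≤ 4/3 ‖c i‖²`.
Together with `v` the lifts form a basis of `L` whose Gram determinant is `‖v‖²` times that of
`c`. This gives `∏ ‖b i‖² ≤ (4/3)^(k(k-1)/2) covol(L)²`, which implies the claim since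
`√(4/3) ≤ 3/2` and `ω_k ≤ 2^k`, the unit ball lying in the cube `[-1, 1]^k`.
-/

open Module Submodule Matrix MeasureTheory

lemma unitBallVol_pos (k : ℕ) : 0 < unitBallVol k :=
  div_pos (Real.rpow_pos_of_pos Real.pi_pos _) (Real.Gamma_pos_of_pos (by positivity))

lemma ofReal_unitBallVol (k : ℕ) [NeZero k] :
    ENNReal.ofReal (unitBallVol k) = volume (Metric.ball (0 : EuclideanSpace ℝ (Fin k)) 1) := by
  rw [EuclideanSpace.volume_ball, Fintype.card_fin, ENNReal.ofReal_one, one_pow, one_mul,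
    unitBallVol, Real.sqrt_eq_rpow, ← Real.rpow_natCast, ← Real.rpow_mul Real.pi_pos.le]
  ring_nf

lemma unitBallVol_le_two_pow (k : ℕ) : unitBallVol k ≤ 2 ^ k := by
  rcases Nat.eq_zero_or_pos k with rfl | hk
  · simp [unitBallVol]
  have : NeZero k := ⟨hk.ne'⟩
  have hsub : Metric.ball (0 : EuclideanSpace ℝ (Fin k)) 1 ⊆
      WithLp.ofLp ⁻¹' Metric.ball (0 : Fin k → ℝ) 1 := by
    intro x hx
    rw [Set.mem_preimage, mem_ball_zero_iff, pi_norm_lt_iff one_pos]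
    exact fun i => (PiLp.norm_apply_le x i).trans_lt (mem_ball_zero_iff.mp hx)
  have hvol := (measure_mono hsub).trans_eq
    ((PiLp.volume_preserving_ofLp (Fin k)).measure_preimage measurableSet_ball.nullMeasurableSet)
  rwa [← ofReal_unitBallVol, Real.volume_pi_ball _ one_pos, Fintype.card_fin, mul_one,
    ENNReal.ofReal_le_ofReal_iff (by positivity)] at hvol

section Discrete

variable {E : Type*} [NormedAddCommGroup E] [ProperSpace E] (L : Submodule ℤ E)
  [DiscreteTopology L]

lemma finite_inter_closedBall_of_discrete (r : ℝ) :
    ((L : Set E) ∩ Metric.closedBall 0 r).Finite := by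
  have : DiscreteTopology L.toAddSubgroup := ‹_›
  simpa [Set.inter_comm] using Metric.finite_isBounded_inter_isClosed
    (isDiscrete_iff_discreteTopology.mpr ‹DiscreteTopology L›) Metric.isBounded_closedBall
    (AddSubgroup.isClosed_of_discrete (H := L.toAddSubgroup))

lemma exists_shortest_vector (hL : L ≠ ⊥) :
    ∃ v ∈ L, v ≠ 0 ∧ ∀ w ∈ L, w ≠ 0 → ‖v‖ ≤ ‖w‖ := by
  obtain ⟨x, hxL, hx0⟩ := (Submodule.ne_bot_iff L).mp hL
  obtain ⟨v, ⟨⟨hvL, hvx⟩, hv0⟩, hmin⟩ := Set.exists_min_image _ norm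
    ((finite_inter_closedBall_of_discrete L ‖x‖).subset (Set.sdiff_subset (t := {0})))
    ⟨x, ⟨hxL, by simp⟩, hx0⟩
  refine ⟨v, hvL, hv0, fun w hwL hw0 => ?_⟩
  rw [mem_closedBall_zero_iff] at hvx
  by_cases hwx : ‖w‖ ≤ ‖x‖
  · exact hmin w ⟨⟨hwL, mem_closedBall_zero_iff.mpr hwx⟩, hw0⟩
  · linarith

end Discrete

section Gram

variable {E : Type*} [NormedAddCommGroup E] [InnerProductSpace ℝ E]

lemma gram_sum_smul {ι κ : Type*} [Fintype κ] (P : Matrix ι κ ℝ) (u : κ → E) :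
    gram ℝ (fun i => ∑ j, P i j • u j) = P * gram ℝ u * Pᵀ := by
  ext i j
  simp only [gram_apply, mul_apply, transpose_apply, inner_sum, sum_inner, real_inner_smul_left,
    real_inner_smul_right, Finset.sum_mul]
  refine Finset.sum_congr rfl fun l _ => Finset.sum_congr rfl fun k _ => ?_
  rw [real_inner_comm]; ring

lemma det_gram_basis_eq {ι : Type*} [Fintype ι] [DecidableEq ι] {L : Submodule ℤ E}
    (b c : Basis ι ℤ L) :
    (gram ℝ fun i => (c i : E)).det = (gram ℝ fun i => (b i : E)).det := by
  set U := (b.toMatrix c)ᵀ.map (Int.cast : ℤ → ℝ)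
  have hc : (fun i => (c i : E)) = fun i => ∑ j, U i j • (b j : E) := by
    ext1 i
    conv_lhs => rw [← b.sum_repr (c i)]
    simp only [coe_sum, coe_smul, U, map_apply, transpose_apply, Basis.toMatrix_apply,
      Int.cast_smul_eq_zsmul]
  have hU : U.det ^ 2 = 1 := by
    rcases Int.isUnit_iff.mp (b.isUnit_det c) with h | h <;>
      simp [U, ← Int.cast_det, det_transpose, ← Basis.det_apply, h]
  rw [hc, gram_sum_smul, det_mul, det_mul, det_transpose]
  linear_combination (gram ℝ fun i => (b i : E)).det * hU

lemma det_gram_add_smul_self {ι : Type*} [Fintype ι] [DecidableEq ι] (y : ι → E) (c : ι → ℝ)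
    (k : ι) (hk : c k = 0) : (gram ℝ (fun i => y i + c i • y k)).det = (gram ℝ y).det := by
  have hrow (z : ι → E) : (of fun i j => inner ℝ (y i + c i • y k) (z j)).det =
      (of fun i j => inner ℝ (y i) (z j)).det :=
    det_eq_of_forall_row_eq_smul_add_const c k hk fun i j => by
      simp [inner_add_left, real_inner_smul_left]
  calc (gram ℝ (fun i => y i + c i • y k)).det
      = (of fun i j => inner ℝ (y i) (y j + c j • y k)).det := hrow _
    _ = (of fun i j => inner ℝ (y i + c i • y k) (y j)).det := by
        rw [← det_transpose]; congr 1; ext i j; exact real_inner_comm _ _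
    _ = (gram ℝ y).det := hrow y

lemma det_gram_fin_cons_of_inner_eq_zero {n : ℕ} (v : E) (w : Fin n → E)
    (h : ∀ i, inner ℝ v (w i) = 0) :
    (gram ℝ (Fin.cons v w : Fin (n + 1) → E)).det = ‖v‖ ^ 2 * (gram ℝ w).det := by
  have hsub : (gram ℝ (Fin.cons v w : Fin (n + 1) → E)).submatrix Fin.succ Fin.succ = gram ℝ w :=
    rfl
  rw [det_succ_row_zero, Fin.sum_univ_succ, Finset.sum_eq_zero fun j _ => by simp [h]]
  simp [hsub]

lemma det_gram_fin_cons {n : ℕ} (v : E) (w : Fin n → E) :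
    (gram ℝ (Fin.cons v w : Fin (n + 1) → E)).det =
      ‖v‖ ^ 2 * (gram ℝ (fun i => (ℝ ∙ v)ᗮ.orthogonalProjectionOnto (w i))).det := by
  set u : Fin n → E := fun i => (ℝ ∙ v)ᗮ.starProjection (w i)
  -- `w j = u j + (⟪v, w j⟫ / ‖v‖²) • v`, and adding multiples of `v` does not change the determinant
  have hw : (Fin.cons v w : Fin (n + 1) → E) = fun i =>
      (Fin.cons v u : Fin (n + 1) → E) i + (Fin.cons 0 fun j => inner ℝ v (w j) / ‖v‖ ^ 2 :
        Fin (n + 1) → ℝ) i • (Fin.cons v u : Fin (n + 1) → E) 0 := by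
    ext1 i
    refine Fin.cases (by simp) (fun j => ?_) i
    simp only [Fin.cons_succ, Fin.cons_zero, u]
    have h := starProjection_singleton ℝ (v := v) (w j)
    simp only [RCLike.ofReal_real_eq_id, id_eq] at h
    rw [← h, add_comm, starProjection_add_starProjection_orthogonal]
  rw [hw, det_gram_add_smul_self _ _ 0 rfl, det_gram_fin_cons_of_inner_eq_zero]
  · rfl
  · intro i
    exact mem_orthogonal_singleton_iff_inner_right.mp (starProjection_apply_mem _ _)

end Gram

lemma det_gram_euclideanSpace {ι : Type*} [Fintype ι] [DecidableEq ι]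
    (v : ι → EuclideanSpace ℝ ι) : (gram ℝ v).det = (of fun i j => v i j).det ^ 2 := by
  have : gram ℝ v = (of fun i j => v i j) * (of fun i j => v i j)ᵀ := by
    ext i j
    simp [mul_apply, PiLp.inner_apply, mul_comm]
  rw [this, det_mul, det_transpose, sq]

section Projection

variable {E : Type*} [NormedAddCommGroup E] [InnerProductSpace ℝ E]

lemma exists_norm_sub_zsmul_sq_le (v x : E) :
    ∃ m : ℤ, ‖x - m • v‖ ^ 2 ≤ ‖(ℝ ∙ v)ᗮ.orthogonalProjectionOnto x‖ ^ 2 + ‖v‖ ^ 2 / 4 := by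
  set t := inner ℝ v x / ‖v‖ ^ 2
  refine ⟨round t, ?_⟩
  have hpar : (ℝ ∙ v).starProjection (x - round t • v) = (t - round t) • v := by
    rw [map_sub, map_zsmul, starProjection_singleton,
      starProjection_eq_self_iff.mpr (mem_span_singleton_self v), sub_smul, Int.cast_smul_eq_zsmul]
    rfl
  have hperp : (ℝ ∙ v)ᗮ.starProjection (x - round t • v) = (ℝ ∙ v)ᗮ.starProjection x := by
    rw [map_sub, map_zsmul, starProjection_orthogonalComplement_singleton_eq_zero, smul_zero,
      sub_zero]
  have hround : (t - round t) ^ 2 ≤ 1 / 4 := by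
    rw [← sq_abs]; nlinarith [abs_sub_round t, abs_nonneg (t - round t)]
  rw [norm_sq_eq_add_norm_sq_starProjection _ (ℝ ∙ v), hpar, hperp, norm_smul, mul_pow,
    Real.norm_eq_abs, sq_abs, starProjection_apply, norm_coe]
  nlinarith [sq_nonneg ‖v‖]

namespace Submodule

noncomputable def projPerp (L : Submodule ℤ E) (v : E) : Submodule ℤ (ℝ ∙ v)ᗮ :=
  L.map (((ℝ ∙ v)ᗮ.orthogonalProjectionOnto : E →ₗ[ℝ] (ℝ ∙ v)ᗮ).restrictScalars ℤ)

variable {L : Submodule ℤ E} {v : E}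

lemma mem_projPerp {y : (ℝ ∙ v)ᗮ} :
    y ∈ L.projPerp v ↔ ∃ x ∈ L, (ℝ ∙ v)ᗮ.orthogonalProjectionOnto x = y :=
  Iff.rfl

lemma exists_lift_norm_sq_le (hv : v ∈ L) {y : (ℝ ∙ v)ᗮ} (hy : y ∈ L.projPerp v) :
    ∃ x ∈ L, (ℝ ∙ v)ᗮ.orthogonalProjectionOnto x = y ∧ ‖x‖ ^ 2 ≤ ‖y‖ ^ 2 + ‖v‖ ^ 2 / 4 := by
  obtain ⟨x, hx, rfl⟩ := mem_projPerp.mp hy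
  obtain ⟨m, hm⟩ := exists_norm_sub_zsmul_sq_le v x
  refine ⟨x - m • v, L.sub_mem hx (L.smul_mem m hv), ?_, hm⟩
  rw [map_sub, map_zsmul, orthogonalProjectionOnto_orthogonalComplement_singleton_eq_zero,
    smul_zero, sub_zero]

lemma discreteTopology_projPerp [FiniteDimensional ℝ E] [DiscreteTopology L] (hv : v ∈ L) :
    DiscreteTopology (L.projPerp v) := by
  rw [discreteTopology_iff_isOpen_singleton_zero]
  refine isOpen_singleton_of_finite_mem_nhds 0 (s := Subtype.val ⁻¹' Metric.ball 0 1)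
    ((Metric.isOpen_ball.preimage continuous_subtype_val).mem_nhds (by simp)) ?_
  refine Set.Finite.of_finite_image ?_ Subtype.val_injective.injOn
  refine ((finite_inter_closedBall_of_discrete L (1 + ‖v‖)).image
    (ℝ ∙ v)ᗮ.orthogonalProjectionOnto).subset ?_
  rintro _ ⟨y, hy, rfl⟩
  obtain ⟨x, hxL, hxy, hx⟩ := exists_lift_norm_sq_le hv y.2
  refine ⟨x, ⟨hxL, mem_closedBall_zero_iff.mpr ?_⟩, hxy⟩
  have hy1 : ‖(y : (ℝ ∙ v)ᗮ)‖ < 1 := mem_ball_zero_iff.mp hy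
  nlinarith [norm_nonneg x, norm_nonneg v, norm_nonneg (y : (ℝ ∙ v)ᗮ)]

lemma span_projPerp_eq_top (hL : span ℝ (L : Set E) = ⊤) :
    span ℝ (L.projPerp v : Set (ℝ ∙ v)ᗮ) = ⊤ := by
  rw [projPerp, map_coe, LinearMap.coe_restrictScalars, ← map_span, hL, map_top,
    LinearMap.range_eq_top]
  exact fun y => ⟨y, orthogonalProjectionOnto_mem_subspace_eq_self y⟩

lemma exists_zsmul_eq_of_mem_span_singleton (hv : v ∈ L) (hv0 : v ≠ 0)
    (hmin : ∀ w ∈ L, w ≠ 0 → ‖v‖ ≤ ‖w‖) {x : E} (hx : x ∈ L) (hxv : x ∈ ℝ ∙ v) :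
    ∃ m : ℤ, m • v = x := by
  obtain ⟨m, hm⟩ := exists_norm_sub_zsmul_sq_le v x
  have hπ : (ℝ ∙ v)ᗮ.orthogonalProjectionOnto x = 0 := by
    obtain ⟨t, rfl⟩ := mem_span_singleton.mp hxv
    rw [map_smul, orthogonalProjectionOnto_orthogonalComplement_singleton_eq_zero, smul_zero]
  refine ⟨m, (sub_eq_zero.mp ?_).symm⟩
  by_contra h
  have hle := hmin _ (L.sub_mem hx (L.smul_mem m hv)) h
  rw [hπ, norm_zero] at hm
  nlinarith [norm_pos_iff.mpr hv0]

lemma exists_lift_norm_sq_le_four_thirds (hv : v ∈ L) (hmin : ∀ w ∈ L, w ≠ 0 → ‖v‖ ≤ ‖w‖)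
    {y : (ℝ ∙ v)ᗮ} (hy : y ∈ L.projPerp v) (hy0 : y ≠ 0) :
    ∃ x ∈ L, (ℝ ∙ v)ᗮ.orthogonalProjectionOnto x = y ∧ ‖x‖ ^ 2 ≤ 4 / 3 * ‖y‖ ^ 2 := by
  obtain ⟨x, hxL, hxy, hx⟩ := exists_lift_norm_sq_le hv hy
  have hx0 : x ≠ 0 := by
    rintro rfl
    exact hy0 (by rw [← hxy, map_zero])
  have hle := hmin x hxL hx0
  exact ⟨x, hxL, hxy, by nlinarith [norm_nonneg v]⟩

lemma top_le_span_fin_cons {n : ℕ} (hv : v ∈ L)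
    (hline : ∀ x ∈ L, x ∈ ℝ ∙ v → ∃ m : ℤ, m • v = x) (c : Basis (Fin n) ℤ (L.projPerp v))
    (d : Fin n → L) (hd : ∀ i, (ℝ ∙ v)ᗮ.orthogonalProjectionOnto (d i : E) = c i) :
    ⊤ ≤ span ℤ (Set.range (Fin.cons ⟨v, hv⟩ d : Fin (n + 1) → L)) := by
  rintro x -
  let y : L.projPerp v := ⟨_, mem_projPerp.mpr ⟨x, x.2, rfl⟩⟩
  set z : L := x - ∑ i, c.repr y i • d i
  have hz : (ℝ ∙ v)ᗮ.orthogonalProjectionOnto (z : E) = 0 := by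
    have hy : (y : (ℝ ∙ v)ᗮ) = ∑ i, c.repr y i • (c i : (ℝ ∙ v)ᗮ) := by
      conv_lhs => rw [← c.sum_repr y]
      simp only [coe_sum, coe_smul]
    simp only [z, Submodule.coe_sub, coe_sum, coe_smul, map_sub, map_sum, map_zsmul, hd]
    rw [← hy, sub_self]
  obtain ⟨m, hm⟩ := hline z z.2 (by
    rw [← orthogonal_orthogonal (ℝ ∙ v), ← orthogonalProjectionOnto_eq_zero_iff]; exact hz)
  have hx : x = m • ⟨v, hv⟩ + ∑ i, c.repr y i • d i := by
    rw [← sub_eq_iff_eq_add]; exact (Subtype.ext hm).symm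
  rw [hx]
  exact add_mem (smul_mem _ _ (subset_span ⟨0, rfl⟩))
    (sum_mem fun i _ => smul_mem _ _ (subset_span ⟨i.succ, rfl⟩))

end Submodule

end Projection

section Hermite

variable {E : Type*} [NormedAddCommGroup E] [InnerProductSpace ℝ E] [FiniteDimensional ℝ E]

lemma exists_basis_of_basis_projPerp {n : ℕ} (hE : finrank ℝ E = n + 1) (L : Submodule ℤ E)
    [DiscreteTopology L] [IsZLattice ℝ L] {v : E} (hv : v ∈ L) (hv0 : v ≠ 0)
    (hmin : ∀ w ∈ L, w ≠ 0 → ‖v‖ ≤ ‖w‖) (c : Basis (Fin n) ℤ (L.projPerp v)) :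
    ∃ b : Basis (Fin (n + 1)) ℤ L,
      (∏ i, ‖(b i : E)‖) ^ 2 ≤ (4 / 3) ^ n * ‖v‖ ^ 2 * (∏ i, ‖(c i : (ℝ ∙ v)ᗮ)‖) ^ 2 ∧
      (gram ℝ fun i => (b i : E)).det = ‖v‖ ^ 2 * (gram ℝ fun i => (c i : (ℝ ∙ v)ᗮ)).det := by
  have hlift (i : Fin n) : ∃ x ∈ L, (ℝ ∙ v)ᗮ.orthogonalProjectionOnto x = c i ∧
      ‖x‖ ^ 2 ≤ 4 / 3 * ‖(c i : (ℝ ∙ v)ᗮ)‖ ^ 2 :=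
    exists_lift_norm_sq_le_four_thirds hv hmin (c i).2 (by simpa using c.ne_zero i)
  choose d hdL hdπ hd using hlift
  have hspan := top_le_span_fin_cons hv
    (fun _ hx hxv => exists_zsmul_eq_of_mem_span_singleton hv hv0 hmin hx hxv) c
    (fun i => ⟨d i, hdL i⟩) hdπ
  let b := basisOfTopLeSpanOfCardEqFinrank _ hspan (by rw [ZLattice.rank ℝ L, hE, Fintype.card_fin])
  have hb : (fun i => (b i : E)) = Fin.cons v d := by
    ext1 i
    refine Fin.cases ?_ (fun j => ?_) i <;> simp [b]
  refine ⟨b, ?_, ?_⟩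
  · rw [Fin.prod_univ_succ, congrFun hb 0]
    simp only [congrFun hb, Fin.cons_zero, Fin.cons_succ]
    rw [mul_pow, ← Finset.prod_pow, ← Finset.prod_pow, mul_comm ((4 / 3 : ℝ) ^ n), mul_assoc]
    gcongr
    calc ∏ i, ‖d i‖ ^ 2 ≤ ∏ i, (4 / 3 * ‖(c i : (ℝ ∙ v)ᗮ)‖ ^ 2) :=
          Finset.prod_le_prod (fun _ _ => sq_nonneg _) fun i _ => hd i
      _ = (4 / 3) ^ n * ∏ i, ‖(c i : (ℝ ∙ v)ᗮ)‖ ^ 2 := by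
          rw [Finset.prod_mul_distrib, Finset.prod_const, Finset.card_univ, Fintype.card_fin]
  · rw [hb, det_gram_fin_cons]
    simp only [hdπ]

theorem exists_basis_prod_norm_sq_le_det_gram (n : ℕ) (hE : finrank ℝ E = n)
    (L : Submodule ℤ E) [DiscreteTopology L] [IsZLattice ℝ L] :
    ∃ b : Basis (Fin n) ℤ L, (∏ i, ‖(b i : E)‖) ^ 2 ≤
      (4 / 3 : ℝ) ^ (n * (n - 1) / 2) * (gram ℝ fun i => (b i : E)).det := by
  induction n generalizing E with
  | zero =>
    refine ⟨Module.finBasisOfFinrankEq ℤ L (by rw [ZLattice.rank ℝ L, hE]), ?_⟩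
    simp
  | succ n ih =>
    have : Nontrivial E := Module.nontrivial_of_finrank_eq_succ hE
    have hL : L ≠ ⊥ := by
      rintro rfl
      simpa using (IsZLattice.span_top (K := ℝ) (L := (⊥ : Submodule ℤ E)))
    obtain ⟨v, hv, hv0, hmin⟩ := exists_shortest_vector L hL
    have := discreteTopology_projPerp hv
    have : IsZLattice ℝ (L.projPerp v) := ⟨span_projPerp_eq_top IsZLattice.span_top⟩
    have : Fact (finrank ℝ E = n + 1) := ⟨hE⟩
    obtain ⟨c, hc⟩ := ih (finrank_orthogonal_span_singleton hv0) (L.projPerp v)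
    obtain ⟨b, hb, hgram⟩ := exists_basis_of_basis_projPerp hE L hv hv0 hmin c
    refine ⟨b, hb.trans ?_⟩
    rw [hgram, Nat.triangle_succ, pow_add]
    calc (4 / 3) ^ n * ‖v‖ ^ 2 * (∏ i, ‖(c i : (ℝ ∙ v)ᗮ)‖) ^ 2
        ≤ (4 / 3) ^ n * ‖v‖ ^ 2 * ((4 / 3 : ℝ) ^ (n * (n - 1) / 2) *
            (gram ℝ fun i => (c i : (ℝ ∙ v)ᗮ)).det) := by gcongr
      _ = _ := by ring

end Hermite

theorem reduced_basis_product_bound_general (k : ℕ)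
    (Λ : Submodule ℤ (EuclideanSpace ℝ (Fin k)))
    (b0 : Module.Basis (Fin k) ℤ Λ)
    (hfull : LinearIndependent ℝ (fun i => (b0 i : EuclideanSpace ℝ (Fin k)))) :
    ∃ b : Module.Basis (Fin k) ℤ Λ,
      (∏ i, ‖(b i : EuclideanSpace ℝ (Fin k))‖)
        ≤ 2 ^ k * (3 / 2 : ℝ) ^ (k * (k - 1) / 2) *
          |Matrix.det (Matrix.of fun i j : Fin k => (b0 i : EuclideanSpace ℝ (Fin k)) j)|
          / unitBallVol k := by
  set A := Matrix.of fun i j : Fin k => (b0 i : EuclideanSpace ℝ (Fin k)) j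
  set N := k * (k - 1) / 2
  let bE := Basis.mk hfull (hfull.span_eq_top_of_card_eq_finrank' (by simp)).ge
  have hspan : span ℤ (Set.range bE) = Λ := by
    rw [Basis.coe_mk, show (fun i => (b0 i : EuclideanSpace ℝ (Fin k))) = Λ.subtype ∘ b0 from rfl,
      Set.range_comp, ← map_span, b0.span_eq, Submodule.map_top, range_subtype]
  have : DiscreteTopology Λ := by rw [← hspan]; infer_instance
  have : IsZLattice ℝ Λ := ⟨by rw [← hspan]; exact ZSpan.span_top bE⟩
  obtain ⟨b, hb⟩ := exists_basis_prod_norm_sq_le_det_gram k finrank_euclideanSpace_fin Λ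
  rw [det_gram_basis_eq b0 b, det_gram_euclideanSpace] at hb
  have hprod : ∏ i, ‖(b i : EuclideanSpace ℝ (Fin k))‖ ≤ (3 / 2) ^ N * |A.det| := by
    refine (pow_le_pow_iff_left₀ (by positivity) (by positivity) two_ne_zero).mp (hb.trans ?_)
    rw [mul_pow, sq_abs, ← pow_mul, pow_mul']
    gcongr
    norm_num
  refine ⟨b, hprod.trans ?_⟩
  calc (3 / 2 : ℝ) ^ N * |A.det| = 2 ^ k * (3 / 2) ^ N * |A.det| / 2 ^ k := by field_simp
    _ ≤ _ := by gcongr; exacts [unitBallVol_pos k, unitBallVol_le_two_pow k]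

theorem reduced_basis_product_bound (k : ℕ) (hk : 0 < k)
    (Λ : Submodule ℤ (EuclideanSpace ℝ (Fin k)))
    (b0 : Module.Basis (Fin k) ℤ Λ)
    (hfull : LinearIndependent ℝ (fun i => (b0 i : EuclideanSpace ℝ (Fin k)))) :
    ∃ b : Module.Basis (Fin k) ℤ Λ,
      (∏ i, ‖(b i : EuclideanSpace ℝ (Fin k))‖)
        ≤ 2 ^ k * (3 / 2 : ℝ) ^ (k * (k - 1) / 2) *
          |Matrix.det (Matrix.of fun i j : Fin k => (b0 i : EuclideanSpace ℝ (Fin k)) j)|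
          / unitBallVol k :=
  reduced_basis_product_bound_general k Λ b0 hfull
end
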